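/- Fix k ≥ 2, positive integers ρk, ρ̄k with ρ+ρ̄=1, Δ > 0, R ∈ ℕ, R ≥ 1. Let Ẑ = V Λ U_⊗ᵀ be the SVD of the (δ,R)-SEL matrix (with factors as in the SVD lemma). Then the matrix B* = U_⊗ Vᵀ satisfies the element-wise strict inequality B* ⊙ Ẑᵀ > 0, i.e., every entry of B* has the same (strict) sign as the corresponding entry of Ẑᵀ. -/

import Mathlib

/-!
Multiplying out the factors, `B* = U_⊗ Vᵀ` has the block pattern of `Ẑᵀ`: constant negative
off-diagonal blocks, and diagonal blocks `w 𝟙𝟙ᵀ + x (I - v 𝟙𝟙ᵀ)` with `w > 0`, facing the blocks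
`y (I - t 𝟙𝟙ᵀ)` of `Ẑᵀ`. Signs agree entrywise as soon as `w < x v`; with the normalizer
`N = k √((ρ̄ + Rρ)(ρ̄ + ρΔ²))` of `B*` this says `N > ρ̄ k` and `N > Δρk√R`, which hold because
`(ρ̄ + Rρ)(ρ̄ + ρΔ²)` exceeds both `ρ̄ ρ̄` and `Rρ ρΔ²`.
-/

open Matrix

noncomputable def selNormalizer (k R ρ ρbar Δ : ℝ) : ℝ :=
  √(k * (ρbar + R * ρ)) * √(k * (ρbar + ρ * Δ ^ 2))

section Scalar

variable {k R ρ ρbar Δ : ℝ}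

theorem selNormalizer_pos (hk : 0 < k) (hR : 0 ≤ R) (hρ : 0 < ρ) (hρbar : 0 < ρbar) :
    0 < selNormalizer k R ρ ρbar Δ := by
  unfold selNormalizer
  positivity

theorem lt_sqrt_mul_sqrt {x p q : ℝ} (hp : 0 ≤ p) (h : x ^ 2 < p * q) : x < √p * √q := by
  rw [← Real.sqrt_mul hp]
  exact Real.lt_sqrt_of_sq_lt h

theorem mul_lt_selNormalizer (hk : 0 < k) (hR : 0 < R) (hρ : 0 < ρ) (hρbar : 0 < ρbar) :
    ρbar * k < selNormalizer k R ρ ρbar Δ := by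
  refine lt_sqrt_mul_sqrt (by positivity) ?_
  have h : ρbar * ρbar < (ρbar + R * ρ) * (ρbar + ρ * Δ ^ 2) :=
    mul_lt_mul (by linarith [mul_pos hR hρ]) (by nlinarith [sq_nonneg Δ]) hρbar (by positivity)
  calc (ρbar * k) ^ 2 = k ^ 2 * (ρbar * ρbar) := by ring
    _ < k ^ 2 * ((ρbar + R * ρ) * (ρbar + ρ * Δ ^ 2)) := by gcongr
    _ = k * (ρbar + R * ρ) * (k * (ρbar + ρ * Δ ^ 2)) := by ring

theorem mul_sqrt_lt_selNormalizer (hk : 0 < k) (hR : 0 < R) (hρ : 0 < ρ) (hρbar : 0 < ρbar) :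
    Δ * ρ * k * √R < selNormalizer k R ρ ρbar Δ := by
  refine lt_sqrt_mul_sqrt (by positivity) ?_
  have h : R * ρ * (ρ * Δ ^ 2) < (ρbar + R * ρ) * (ρbar + ρ * Δ ^ 2) :=
    mul_lt_mul'' (by linarith) (by linarith) (by positivity) (by positivity)
  calc (Δ * ρ * k * √R) ^ 2 = k ^ 2 * (R * ρ * (ρ * Δ ^ 2)) := by
        rw [mul_pow, Real.sq_sqrt hR.le]; ring
    _ < k ^ 2 * ((ρbar + R * ρ) * (ρbar + ρ * Δ ^ 2)) := by gcongr
    _ = k * (ρbar + R * ρ) * (k * (ρbar + ρ * Δ ^ 2)) := by ring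

theorem div_selNormalizer_lt_left (hk : 0 < k) (hR : 0 < R) (hρ : 0 < ρ) (hρbar : 0 < ρbar) :
    Δ * (ρ / ρbar) / selNormalizer k R ρ ρbar Δ < (√R)⁻¹ * (ρbar * k)⁻¹ := by
  have hN := selNormalizer_pos (Δ := Δ) hk hR.le hρ hρbar
  have hsR : 0 < √R := Real.sqrt_pos.2 hR
  calc Δ * (ρ / ρbar) / selNormalizer k R ρ ρbar Δ
      = Δ * ρ * k * √R / selNormalizer k R ρ ρbar Δ * ((√R)⁻¹ * (ρbar * k)⁻¹) := by
        field_simp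
    _ < 1 * ((√R)⁻¹ * (ρbar * k)⁻¹) := by
        gcongr
        exact (div_lt_one hN).2 (mul_sqrt_lt_selNormalizer hk hR hρ hρbar)
    _ = (√R)⁻¹ * (ρbar * k)⁻¹ := one_mul _

theorem div_selNormalizer_lt_right (hk : 0 < k) (hR : 0 < R) (hρ : 0 < ρ) (hρbar : 0 < ρbar) :
    ρbar / ρ / selNormalizer k R ρ ρbar Δ < (ρ * k)⁻¹ := by
  have hN := selNormalizer_pos (Δ := Δ) hk hR.le hρ hρbar
  calc ρbar / ρ / selNormalizer k R ρ ρbar Δ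
      = ρbar * k / selNormalizer k R ρ ρbar Δ * (ρ * k)⁻¹ := by
        field_simp
    _ < 1 * (ρ * k)⁻¹ := by
        gcongr
        exact (div_lt_one hN).2 (mul_lt_selNormalizer hk hR hρ hρbar)
    _ = (ρ * k)⁻¹ := one_mul _

theorem one_add_sq_le_mul (hρbar : 1 ≤ ρbar * k) (hρ : 1 ≤ ρ * k) :
    1 + Δ ^ 2 ≤ k * (ρbar + ρ * Δ ^ 2) := by
  nlinarith [mul_le_mul_of_nonneg_right hρ (sq_nonneg Δ)]

end Scalar

theorem centered_entries_mul_pos {α : Type*} [DecidableEq α] (i i' : α) {x v w y t : ℝ}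
    (hx : 0 < x) (hv : v ≤ 1) (hw : 0 < w) (hwv : w < x * v) (hy : 0 < y)
    (ht : 0 < t) (ht1 : t < 1) :
    0 < (w + x * ((if i = i' then 1 else 0) - v)) * (y * ((if i' = i then 1 else 0) - t)) := by
  by_cases h : i = i'
  · subst h
    simp only [if_true]
    exact mul_pos (by nlinarith) (by nlinarith)
  · rw [if_neg h, if_neg (Ne.symm h)]
    exact mul_pos_of_neg_of_neg (by linarith) (by nlinarith)

theorem sum_mul_of_mul_transpose_eq {m n : Type*} [Fintype n] [DecidableEq m]
    {P : Matrix m n ℝ} {c : ℝ} (hP : P * Pᵀ = 1 - c • of fun _ _ => 1) (i i' : m) :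
    ∑ j, P i j * P i' j = (if i = i' then 1 else 0) - c := by
  simpa [mul_apply, one_apply] using congrFun (congrFun hP i) i'

theorem sqrt_div_mul_sqrt_div {x y : ℝ} (hx : 0 < x) (hy : 0 < y) :
    √(x / y) * √(y / x) = 1 := by
  rw [← Real.sqrt_mul (by positivity), div_mul_div_cancel₀ hy.ne', div_self hx.ne',
    Real.sqrt_one]

section Factors

variable {a b : ℕ} (k R : ℕ) (ρ ρbar Δ : ℝ)
  (P1 : Matrix (Fin a) (Fin (a - 1)) ℝ) (P2 : Matrix (Fin b) (Fin (b - 1)) ℝ)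

noncomputable def selV : Matrix (Fin a ⊕ Fin b) ((Fin (a - 1) ⊕ Unit) ⊕ Fin (b - 1)) ℝ :=
  fromBlocks (fromCols P1 (of fun _ _ => -Δ * √(ρ / ρbar) / √(k * (ρbar + ρ * Δ ^ 2)))) 0
    (fromCols 0 (of fun _ _ => √(ρbar / ρ) / √(k * (ρbar + ρ * Δ ^ 2)))) P2

noncomputable def selU :
    Matrix ((Fin a × Fin R) ⊕ Fin b) ((Fin (a - 1) ⊕ Unit) ⊕ Fin (b - 1)) ℝ :=
  fromBlocks
    (fromCols (of fun p j => P1 p.1 j / √R) (of fun _ _ => -√(ρ / ρbar) / √(k * (ρbar + R * ρ))))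
    0 (fromCols 0 (of fun _ _ => √(ρbar / ρ) / √(k * (ρbar + R * ρ)))) P2

variable {k R ρ ρbar Δ P1 P2}

theorem selU_mul_selV_transpose_inl_inl (hρ : 0 < ρ) (hρbar : 0 < ρbar)
    (hP1 : P1 * P1ᵀ = 1 - (a : ℝ)⁻¹ • of fun _ _ => 1) (i : Fin a) (r : Fin R) (i' : Fin a) :
    (selU k R ρ ρbar P1 P2 * (selV k ρ ρbar Δ P1 P2)ᵀ) (Sum.inl (i, r)) (Sum.inl i') =
      Δ * (ρ / ρbar) / selNormalizer k R ρ ρbar Δ +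
        (√R)⁻¹ * ((if i = i' then 1 else 0) - (a : ℝ)⁻¹) := by
  simp only [selU, selV, mul_apply, transpose_apply, of_apply, fromBlocks_apply₁₁,
    fromBlocks_apply₁₂, fromCols_apply_inl, fromCols_apply_inr, Matrix.zero_apply,
    Fintype.sum_sum_type, Finset.univ_unique, Finset.sum_singleton, zero_mul,
    Finset.sum_const_zero, add_zero]
  have hq : √(ρ / ρbar) * √(ρ / ρbar) = ρ / ρbar := Real.mul_self_sqrt (by positivity)
  have hsum : ∑ j, P1 i j / √R * P1 i' j = (√R)⁻¹ * ∑ j, P1 i j * P1 i' j := by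
    rw [Finset.mul_sum]
    exact Finset.sum_congr rfl fun j _ => by ring
  rw [hsum, sum_mul_of_mul_transpose_eq hP1, div_mul_div_comm,
    show -√(ρ / ρbar) * (-Δ * √(ρ / ρbar)) = Δ * (ρ / ρbar) by linear_combination Δ * hq,
    selNormalizer, add_comm]

theorem selU_mul_selV_transpose_inl_inr (hρ : 0 < ρ) (hρbar : 0 < ρbar)
    (i : Fin a) (r : Fin R) (i' : Fin b) :
    (selU k R ρ ρbar P1 P2 * (selV k ρ ρbar Δ P1 P2)ᵀ) (Sum.inl (i, r)) (Sum.inr i') =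
      -(1 / selNormalizer k R ρ ρbar Δ) := by
  simp only [selU, selV, mul_apply, transpose_apply, of_apply, fromBlocks_apply₁₁,
    fromBlocks_apply₁₂, fromBlocks_apply₂₁, fromBlocks_apply₂₂, fromCols_apply_inl,
    fromCols_apply_inr, Matrix.zero_apply, Fintype.sum_sum_type, Finset.univ_unique,
    Finset.sum_singleton, zero_mul, mul_zero, Finset.sum_const_zero, add_zero, zero_add]
  rw [div_mul_div_comm, neg_mul, sqrt_div_mul_sqrt_div hρ hρbar, neg_div, selNormalizer]

theorem selU_mul_selV_transpose_inr_inl (hρ : 0 < ρ) (hρbar : 0 < ρbar)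
    (i : Fin b) (i' : Fin a) :
    (selU k R ρ ρbar P1 P2 * (selV k ρ ρbar Δ P1 P2)ᵀ) (Sum.inr i) (Sum.inl i') =
      -(Δ / selNormalizer k R ρ ρbar Δ) := by
  simp only [selU, selV, mul_apply, transpose_apply, of_apply, fromBlocks_apply₁₁,
    fromBlocks_apply₁₂, fromBlocks_apply₂₁, fromBlocks_apply₂₂, fromCols_apply_inl,
    fromCols_apply_inr, Matrix.zero_apply, Fintype.sum_sum_type, Finset.univ_unique,
    Finset.sum_singleton, zero_mul, mul_zero, Finset.sum_const_zero, add_zero, zero_add]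
  rw [div_mul_div_comm, mul_left_comm, sqrt_div_mul_sqrt_div hρbar hρ, mul_one, neg_div,
    selNormalizer]

theorem selU_mul_selV_transpose_inr_inr (hρ : 0 < ρ) (hρbar : 0 < ρbar)
    (hP2 : P2 * P2ᵀ = 1 - (b : ℝ)⁻¹ • of fun _ _ => 1) (i i' : Fin b) :
    (selU k R ρ ρbar P1 P2 * (selV k ρ ρbar Δ P1 P2)ᵀ) (Sum.inr i) (Sum.inr i') =
      ρbar / ρ / selNormalizer k R ρ ρbar Δ + ((if i = i' then 1 else 0) - (b : ℝ)⁻¹) := by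
  simp only [selU, selV, mul_apply, transpose_apply, of_apply, fromBlocks_apply₂₁,
    fromBlocks_apply₂₂, fromCols_apply_inl, fromCols_apply_inr, Matrix.zero_apply,
    Fintype.sum_sum_type, Finset.univ_unique, Finset.sum_singleton, mul_zero,
    Finset.sum_const_zero, zero_add]
  rw [sum_mul_of_mul_transpose_eq hP2, div_mul_div_comm, Real.mul_self_sqrt (by positivity),
    selNormalizer]

end Factors

theorem sel_hadamard_sign
    (a b k R : ℕ) (ha : 1 ≤ a) (hb : 1 ≤ b)
    (hR : 1 ≤ R)
    (ρ ρbar Δ : ℝ) (hρ : 0 < ρ) (hρbar : 0 < ρbar)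
    (hΔ : 0 < Δ) (hak : (a : ℝ) = ρbar * k) (hbk : (b : ℝ) = ρ * k)
    (P1 : Matrix (Fin a) (Fin (a - 1)) ℝ) (P2 : Matrix (Fin b) (Fin (b - 1)) ℝ)
    (hP1proj : P1 * P1.transpose =
      (1 : Matrix (Fin a) (Fin a) ℝ) - ((a : ℝ))⁻¹ • Matrix.of (fun _ _ => (1 : ℝ)))
    (hP2proj : P2 * P2.transpose =
      (1 : Matrix (Fin b) (Fin b) ℝ) - ((b : ℝ))⁻¹ • Matrix.of (fun _ _ => (1 : ℝ)))
    (V : Matrix (Fin a ⊕ Fin b) ((Fin (a - 1) ⊕ Unit) ⊕ Fin (b - 1)) ℝ)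
    (hV : V = Matrix.of fun r c =>
      match r, c with
      | Sum.inl i, Sum.inl (Sum.inl j) => P1 i j
      | Sum.inl _, Sum.inl (Sum.inr _) =>
          -Δ * Real.sqrt (ρ / ρbar) / Real.sqrt (k * (ρbar + ρ * Δ ^ 2))
      | Sum.inl _, Sum.inr _ => 0
      | Sum.inr _, Sum.inl (Sum.inl _) => 0
      | Sum.inr _, Sum.inl (Sum.inr _) =>
          Real.sqrt (ρbar / ρ) / Real.sqrt (k * (ρbar + ρ * Δ ^ 2))
      | Sum.inr i, Sum.inr j => P2 i j)
    (U : Matrix ((Fin a × Fin R) ⊕ Fin b) ((Fin (a - 1) ⊕ Unit) ⊕ Fin (b - 1)) ℝ)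
    (hU : U = Matrix.of fun r c =>
      match r, c with
      | Sum.inl (i, _), Sum.inl (Sum.inl j) => P1 i j / Real.sqrt R
      | Sum.inl _, Sum.inl (Sum.inr _) =>
          -Real.sqrt (ρ / ρbar) / Real.sqrt (k * (ρbar + R * ρ))
      | Sum.inl _, Sum.inr _ => 0
      | Sum.inr _, Sum.inl (Sum.inl _) => 0
      | Sum.inr _, Sum.inl (Sum.inr _) =>
          Real.sqrt (ρbar / ρ) / Real.sqrt (k * (ρbar + R * ρ))
      | Sum.inr i, Sum.inr j => P2 i j)
    (Z : Matrix (Fin a ⊕ Fin b) ((Fin a × Fin R) ⊕ Fin b) ℝ)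
    (hZ : Z = Matrix.of fun r c =>
      match r, c with
      | Sum.inl i, Sum.inl (i', _) =>
          Δ⁻¹ * ((if i = i' then 1 else 0) - 1 / (k * (ρbar + ρ * Δ ^ 2)))
      | Sum.inl _, Sum.inr _ => -Δ / (k * (ρbar + ρ * Δ ^ 2))
      | Sum.inr _, Sum.inl _ => -1 / (k * (ρbar + ρ * Δ ^ 2))
      | Sum.inr i, Sum.inr i' =>
          (if i = i' then 1 else 0) - Δ ^ 2 / (k * (ρbar + ρ * Δ ^ 2))) :
    ∀ (p : (Fin a × Fin R) ⊕ Fin b) (q : Fin a ⊕ Fin b),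
      0 < (U * V.transpose) p q * Z.transpose p q := by
  obtain rfl : U = selU k R ρ ρbar P1 P2 := by
    subst hU; ext (⟨i, r⟩ | i) ((j | u) | j) <;> rfl
  obtain rfl : V = selV k ρ ρbar Δ P1 P2 := by
    subst hV; ext (i | i) ((j | u) | j) <;> rfl
  subst hZ
  have haR : 1 ≤ ρbar * (k : ℝ) := by rw [← hak]; exact_mod_cast ha
  have hbR : 1 ≤ ρ * (k : ℝ) := by rw [← hbk]; exact_mod_cast hb
  have hk : 0 < (k : ℝ) := pos_of_mul_pos_right (one_pos.trans_le haR) hρbar.le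
  have hRpos : 0 < (R : ℝ) := by exact_mod_cast hR
  have hN := selNormalizer_pos (Δ := Δ) hk hRpos.le hρ hρbar
  have hc : 1 + Δ ^ 2 ≤ k * (ρbar + ρ * Δ ^ 2) := one_add_sq_le_mul haR hbR
  have hΔsq : 0 < Δ ^ 2 := pow_pos hΔ 2
  have hc0 : 0 < k * (ρbar + ρ * Δ ^ 2) := by linarith
  rintro (⟨i, r⟩ | i) (i' | i')
  · rw [selU_mul_selV_transpose_inl_inl hρ hρbar hP1proj, hak]
    exact centered_entries_mul_pos i i' (by positivity) (inv_le_one_of_one_le₀ haR)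
      (div_pos (by positivity) hN) (div_selNormalizer_lt_left hk hRpos hρ hρbar)
      (inv_pos.2 hΔ) (by positivity) ((div_lt_one hc0).2 (by linarith))
  · rw [selU_mul_selV_transpose_inl_inr hρ hρbar]
    exact mul_pos_of_neg_of_neg (neg_neg_of_pos (one_div_pos.2 hN))
      (div_neg_of_neg_of_pos neg_one_lt_zero hc0)
  · rw [selU_mul_selV_transpose_inr_inl hρ hρbar]
    exact mul_pos_of_neg_of_neg (neg_neg_of_pos (div_pos hΔ hN))
      (div_neg_of_neg_of_pos (neg_neg_of_pos hΔ) hc0)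
  · rw [selU_mul_selV_transpose_inr_inr hρ hρbar hP2proj, hbk]
    simpa only [one_mul, transpose_apply, of_apply] using
      centered_entries_mul_pos i i' one_pos (inv_le_one_of_one_le₀ hbR) (div_pos (by positivity) hN)
        (by simpa only [one_mul] using div_selNormalizer_lt_right hk hRpos hρ hρbar)
        one_pos (by positivity) ((div_lt_one hc0).2 (by linarith))
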